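/- arXiv:2205.03981 — 3 statements merged into one kernel-verified Lean document; each statement's English description precedes it below -/
import Mathlib

section
/- Let (p_i)_{i≥0} be nonnegative reals summing to 1, b ≥ 2 an integer, and g(k) = ⌈k/2⌉. Define p_i^1 = {p_i}_{g(1)} for i ≥ 1, p_0^1 = 1 - ∑_{i≥1} p_i^1, and inductively p_i^{k+1} = (1/b)·p_i^k + {((b-1)/b)·p_i}_{g(k+1)} for i ≥ 1, p_0^{k+1} = 1 - ∑_{i≥1} p_i^{k+1}. Then for all i ≥ 1 and k ≥ 1, p_i - k/b^{g(k)} ≤ p_i^k ≤ p_i. -/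
/-!
Each step of the recursion replaces `P` by `P / b` plus a truncation of `(b - 1) / b * p` from
below. Since `p / b + (b - 1) / b * p = p`, the upper bound `P ≤ p` propagates, and an error `e`
at step `k` becomes `e / b` plus at most `b ^ (-g (k + 1))` of truncation error at step `k + 1`.
As `g (k + 1) ≤ g k + 1`, the old error `k / b ^ g k` shrinks to at most `k / b ^ g (k + 1)`,
so the errors add up to `(k + 1) / b ^ g (k + 1)`.
-/

/-- Truncation of `y` to its first `m` base-`b` digits. -/
noncomputable def trunc (b : ℕ) (y : ℝ) (m : ℕ) : ℝ := ⌊y * (b : ℝ) ^ m⌋ / (b : ℝ) ^ m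

/-- `g k = ⌈k/2⌉`. -/
def g (k : ℕ) : ℕ := (k + 1) / 2

theorem trunc_le {b : ℕ} (hb : 0 < b) (y : ℝ) (m : ℕ) : trunc b y m ≤ y := by
  rw [trunc, div_le_iff₀ (by positivity)]
  exact Int.floor_le _

theorem sub_one_div_pow_le_trunc {b : ℕ} (hb : 0 < b) (y : ℝ) (m : ℕ) :
    y - 1 / (b : ℝ) ^ m ≤ trunc b y m := by
  have hpow : (0 : ℝ) < (b : ℝ) ^ m := by positivity
  rw [trunc, le_div_iff₀ hpow, sub_mul, one_div_mul_cancel hpow.ne']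
  exact (Int.sub_one_lt_floor _).le

theorem g_succ_le (k : ℕ) : g (k + 1) ≤ g k + 1 := by
  unfold g
  omega

noncomputable def approxStep (b : ℕ) (p x : ℝ) (m : ℕ) : ℝ :=
  1 / (b : ℝ) * x + trunc b (((b : ℝ) - 1) / b * p) m

section approxStep

variable {b : ℕ} {p x : ℝ}

theorem approxStep_le (hb : 0 < b) (m : ℕ) (hx : x ≤ p) : approxStep b p x m ≤ p := by
  have hbR : (0 : ℝ) < b := by exact_mod_cast hb
  have htrunc := trunc_le hb (((b : ℝ) - 1) / b * p) m
  have hsplit : 1 / (b : ℝ) * p + ((b : ℝ) - 1) / b * p = p := by field_simp; ring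
  have hscaled : 1 / (b : ℝ) * x ≤ 1 / (b : ℝ) * p := by gcongr
  unfold approxStep
  linarith

theorem sub_le_approxStep (hb : 0 < b) {k n m : ℕ} (hm : m ≤ n + 1)
    (hx : p - k / (b : ℝ) ^ n ≤ x) : p - (k + 1) / (b : ℝ) ^ m ≤ approxStep b p x m := by
  have hbR : (1 : ℝ) ≤ b := by exact_mod_cast hb
  have htrunc := sub_one_div_pow_le_trunc hb (((b : ℝ) - 1) / b * p) m
  have hscaled : 1 / (b : ℝ) * (p - k / (b : ℝ) ^ n) ≤ 1 / (b : ℝ) * x := by gcongr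
  have hexpand : 1 / (b : ℝ) * (p - k / (b : ℝ) ^ n) + (((b : ℝ) - 1) / b * p)
      = p - k / (b : ℝ) ^ (n + 1) := by field_simp; ring
  have hshrink : (k : ℝ) / (b : ℝ) ^ (n + 1) ≤ k / (b : ℝ) ^ m := by
    gcongr
  unfold approxStep
  rw [add_div]
  linarith

end approxStep

theorem approx_bounds_general (b : ℕ) (hb : 2 ≤ b) (p : ℕ → ℝ)
    (P : ℕ → ℕ → ℝ)
    (hP1 : ∀ i, 1 ≤ i → P i 1 = trunc b (p i) (g 1))
    (hPrec : ∀ k, 1 ≤ k → ∀ i, 1 ≤ i →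
      P i (k + 1) = (1 / (b : ℝ)) * P i k + trunc b (((b : ℝ) - 1) / b * p i) (g (k + 1))) :
    ∀ i : ℕ, 1 ≤ i → ∀ k : ℕ, 1 ≤ k →
      p i - (k : ℝ) / (b : ℝ) ^ (g k) ≤ P i k ∧ P i k ≤ p i := by
  have hb0 : 0 < b := by omega
  intro i hi k hk
  induction k, hk using Nat.le_induction with
  | base =>
    rw [hP1 i hi, Nat.cast_one]
    exact ⟨sub_one_div_pow_le_trunc hb0 _ _, trunc_le hb0 _ _⟩
  | succ k hk ih =>
    have hstep : P i (k + 1) = approxStep b (p i) (P i k) (g (k + 1)) := hPrec k hk i hi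
    rw [hstep, Nat.cast_succ]
    exact ⟨sub_le_approxStep hb0 (g_succ_le k) ih.1, approxStep_le hb0 _ ih.2⟩

theorem approx_bounds (b : ℕ) (hb : 2 ≤ b) (p : ℕ → ℝ) (hp : ∀ i, 0 ≤ p i)
    (hsum : Summable p) (htot : ∑' i, p i = 1)
    (P : ℕ → ℕ → ℝ)
    (hP1 : ∀ i, 1 ≤ i → P i 1 = trunc b (p i) (g 1))
    (hP0 : ∀ k, 1 ≤ k → P 0 k = 1 - ∑' i, P (i + 1) k)
    (hPrec : ∀ k, 1 ≤ k → ∀ i, 1 ≤ i →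
      P i (k + 1) = (1 / (b : ℝ)) * P i k + trunc b (((b : ℝ) - 1) / b * p i) (g (k + 1))) :
    ∀ i : ℕ, 1 ≤ i → ∀ k : ℕ, 1 ≤ k →
      p i - (k : ℝ) / (b : ℝ) ^ (g k) ≤ P i k ∧ P i k ≤ p i :=
  approx_bounds_general b hb p P hP1 hPrec
end

section
/- (Pyatetskii-Shapiro criterion) Let x be a sequence over a b-symbol alphabet. If there exists a constant C > 0 such that for every word w of length ℓ, limsup_{N→∞} |x[1..N]|_w / N ≤ C·b^{-ℓ}, then x is Borel normal to base b. -/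
open Filter Finset


/-- Finset version of the occurrence count. -/
def cnt {b : ℕ} (x : ℕ → Fin b) {k : ℕ} (w : Fin k → Fin b) (n : ℕ) : ℕ :=
  ((Finset.range (n + 1 - k)).filter (fun j => ∀ t : Fin k, x (j + (t : ℕ)) = w t)).card
/-- Number of occurrences of the length-`k` word `w` in the prefix of length `n`
of the infinite sequence `x` (positions `j` with `j + k ≤ n`). -/
noncomputable def occCount {b : ℕ} (x : ℕ → Fin b) {k : ℕ} (w : Fin k → Fin b) (n : ℕ) : ℕ :=
  Nat.card {j : ℕ // j + k ≤ n ∧ ∀ t : Fin k, x (j + (t : ℕ)) = w t}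

lemma occCount_eq {b : ℕ} (x : ℕ → Fin b) {k : ℕ} (w : Fin k → Fin b) (n : ℕ) :
    occCount x w n = cnt x w n := by
  classical
  rw [occCount, cnt]
  have hset : {j : ℕ | j + k ≤ n ∧ ∀ t : Fin k, x (j + (t : ℕ)) = w t} =
      ↑((Finset.range (n + 1 - k)).filter (fun j => ∀ t : Fin k, x (j + (t : ℕ)) = w t)) := by
    ext j
    simp only [Set.mem_setOf_eq, Finset.coe_filter, Finset.mem_range]
    constructor
    · rintro ⟨h1, h2⟩; exact ⟨by omega, h2⟩
    · rintro ⟨h1, h2⟩; exact ⟨by omega, h2⟩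
  calc Nat.card {j : ℕ // j + k ≤ n ∧ ∀ t : Fin k, x (j + (t : ℕ)) = w t}
      = Nat.card ↥{j : ℕ | j + k ≤ n ∧ ∀ t : Fin k, x (j + (t : ℕ)) = w t} := rfl
    _ = ({j : ℕ | j + k ≤ n ∧ ∀ t : Fin k, x (j + (t : ℕ)) = w t} : Set ℕ).ncard :=
        Nat.card_coe_set_eq _
    _ = _ := by rw [hset, Set.ncard_coe_finset]

lemma cnt_le {b : ℕ} (x : ℕ → Fin b) {k : ℕ} (w : Fin k → Fin b) (n : ℕ) :
    cnt x w n ≤ n + 1 - k := by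
  classical
  calc cnt x w n ≤ (Finset.range (n + 1 - k)).card := Finset.card_filter_le _ _
  _ = n + 1 - k := Finset.card_range _

lemma sum_cnt {b : ℕ} (x : ℕ → Fin b) (k : ℕ) (n : ℕ) :
    ∑ v : Fin k → Fin b, cnt x v n = n + 1 - k := by
  classical
  simp only [cnt, Finset.card_filter]
  rw [Finset.sum_comm]
  have : ∀ j ∈ Finset.range (n + 1 - k),
      (∑ v : Fin k → Fin b, if ∀ t : Fin k, x (j + (t : ℕ)) = v t then 1 else 0) = 1 := by
    intro j _
    rw [Finset.sum_eq_single (fun t : Fin k => x (j + (t : ℕ)))]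
    · simp
    · intro v _ hv
      rw [if_neg]
      intro hc
      exact hv (funext fun t => (hc t).symm)
    · simp
  rw [Finset.sum_congr rfl this, Finset.sum_const, Finset.card_range, smul_eq_mul, mul_one]
/-- extend a finite word to an infinite sequence. -/
def extv {b k : ℕ} (hb : 0 < b) (v : Fin k → Fin b) : ℕ → Fin b :=
  fun m => if h : m < k then v ⟨m, h⟩ else ⟨0, hb⟩

/-- number of occurrences of `w` inside the word `v`. -/
def Acnt {b ℓ k : ℕ} (hb : 0 < b) (w : Fin ℓ → Fin b) (v : Fin k → Fin b) : ℕ :=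
  cnt (extv hb v) w k

/-- occurrences of `w` in `x` at positions in `[i, i + (k+1-ℓ))`. -/
def aI {b ℓ : ℕ} (x : ℕ → Fin b) (w : Fin ℓ → Fin b) (k i : ℕ) : ℕ :=
  ((Finset.range (k + 1 - ℓ)).filter (fun j => ∀ t : Fin ℓ, x (i + j + (t : ℕ)) = w t)).card

lemma Acnt_le {b ℓ k : ℕ} (hb : 0 < b) (w : Fin ℓ → Fin b) (v : Fin k → Fin b) :
    Acnt hb w v ≤ k + 1 - ℓ := by
  classical
  calc Acnt hb w v ≤ (Finset.range (k + 1 - ℓ)).card := by unfold Acnt cnt; exact Finset.card_filter_le _ _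
  _ = _ := Finset.card_range _

lemma Acnt_window {b ℓ k : ℕ} (hb : 0 < b) (w : Fin ℓ → Fin b) (x : ℕ → Fin b) (i : ℕ) :
    Acnt hb w (fun t : Fin k => x (i + (t : ℕ))) = aI x w k i := by
  classical
  rw [Acnt, cnt, aI]
  congr 1
  apply Finset.filter_congr
  intro j hj
  rw [Finset.mem_range] at hj
  constructor
  · intro hyp t
    have ht : j + (t : ℕ) < k := by have := t.2; omega
    have := hyp t
    rw [extv] at this
    simp only [dif_pos ht] at this
    rw [← this]
    congr 1
    omega
  · intro hyp t
    have ht : j + (t : ℕ) < k := by have := t.2; omega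
    rw [extv]
    simp only [dif_pos ht]
    rw [← hyp t]
    congr 1
    omega

lemma sum_Acnt_cnt {b ℓ k : ℕ} (hb : 0 < b) (w : Fin ℓ → Fin b) (x : ℕ → Fin b) (n : ℕ) :
    ∑ v : Fin k → Fin b, Acnt hb w v * cnt x v n
      = ∑ i ∈ Finset.range (n + 1 - k), aI x w k i := by
  classical
  have : ∀ v : Fin k → Fin b, Acnt hb w v * cnt x v n
      = ∑ i ∈ Finset.range (n + 1 - k),
          if (∀ t : Fin k, x (i + (t : ℕ)) = v t) then Acnt hb w v else 0 := by
    intro v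
    rw [cnt, Finset.card_filter, Finset.mul_sum]
    apply Finset.sum_congr rfl
    intro i _
    split_ifs <;> simp
  rw [Finset.sum_congr rfl (fun v _ => this v), Finset.sum_comm]
  apply Finset.sum_congr rfl
  intro i _
  rw [Finset.sum_eq_single (fun t : Fin k => x (i + (t : ℕ)))]
  · rw [if_pos (fun t => rfl), Acnt_window]
  · intro v _ hv
    rw [if_neg]
    intro hc
    exact hv (funext fun t => (hc t).symm)
  · simp

lemma sum_aI_le {b ℓ k : ℕ} (hlk : ℓ ≤ k) (x : ℕ → Fin b) (w : Fin ℓ → Fin b) (n : ℕ) :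
    ∑ i ∈ Finset.range (n + 1 - k), aI x w k i ≤ (k + 1 - ℓ) * cnt x w n := by
  classical
  simp only [aI, Finset.card_filter]
  rw [Finset.sum_comm]
  have hbound : ∀ j ∈ Finset.range (k + 1 - ℓ),
      (∑ i ∈ Finset.range (n + 1 - k),
        if (∀ t : Fin ℓ, x (i + j + (t : ℕ)) = w t) then 1 else 0) ≤ cnt x w n := by
    intro j hj
    rw [Finset.mem_range] at hj
    rw [← Finset.card_filter, cnt]
    apply Finset.card_le_card_of_injOn (fun i => i + j)
    · intro i hi
      simp only [Finset.mem_coe, Finset.mem_filter, Finset.mem_range] at hi ⊢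
      exact ⟨by omega, hi.2⟩
    · intro a _ c _ hac
      simpa using hac
  calc _ ≤ ∑ _j ∈ Finset.range (k + 1 - ℓ), cnt x w n := Finset.sum_le_sum hbound
  _ = (k + 1 - ℓ) * cnt x w n := by rw [Finset.sum_const, Finset.card_range, smul_eq_mul]

lemma le_sum_aI {b ℓ k : ℕ} (hlk : ℓ ≤ k) (x : ℕ → Fin b) (w : Fin ℓ → Fin b) (n : ℕ) :
    (k + 1 - ℓ) * cnt x w n
      ≤ (∑ i ∈ Finset.range (n + 1 - k), aI x w k i) + (k + 1 - ℓ) * (2 * k) := by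
  classical
  simp only [aI, Finset.card_filter]
  rw [Finset.sum_comm]
  set P : ℕ → Prop := fun m => ∀ t : Fin ℓ, x (m + (t : ℕ)) = w t with hP
  have key : ∀ j ∈ Finset.range (k + 1 - ℓ),
      cnt x w n ≤ (∑ i ∈ Finset.range (n + 1 - k),
        if (∀ t : Fin ℓ, x (i + j + (t : ℕ)) = w t) then 1 else 0) + 2 * k := by
    intro j hj
    rw [Finset.mem_range] at hj
    rw [← Finset.card_filter]
    -- the inner filter is the image of a filtered Ico under subtraction
    have h1 : ((Finset.range (n + 1 - k)).filter
        (fun i => ∀ t : Fin ℓ, x (i + j + (t : ℕ)) = w t)).card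
        = ((Finset.Ico j ((n + 1 - k) + j)).filter (fun m => P m)).card := by
      apply Finset.card_nbij (fun i => i + j)
      · intro i hi
        simp only [Finset.mem_coe, Finset.mem_filter, Finset.mem_range, Finset.mem_Ico] at hi ⊢
        exact ⟨⟨by omega, by omega⟩, fun t => hi.2 t⟩
      · intro a ha c hc hac
        simpa using hac
      · intro m hm
        simp only [Finset.coe_filter, Finset.mem_Ico, Set.mem_setOf_eq,
          Set.mem_image, Finset.mem_range] at hm ⊢
        refine ⟨m - j, ⟨by omega, fun t => ?_⟩, by omega⟩
        have hmj : m - j + j = m := by omega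
        rw [hmj]
        exact hm.2 t
    have h2 : (Finset.range (n + 1 - ℓ)).filter (fun m => P m)
        ⊆ ((Finset.Ico j ((n + 1 - k) + j)).filter (fun m => P m))
          ∪ (Finset.range j ∪ Finset.Ico ((n + 1 - k) + j) (n + 1 - ℓ)) := by
      intro m hm
      simp only [Finset.mem_filter, Finset.mem_range, Finset.mem_union, Finset.mem_Ico] at hm ⊢
      by_cases hmj : m < j
      · tauto
      · by_cases hmu : m < (n + 1 - k) + j
        · exact Or.inl ⟨⟨by omega, hmu⟩, hm.2⟩
        · exact Or.inr (Or.inr ⟨by omega, hm.1⟩)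
    have h3 : cnt x w n
        ≤ ((Finset.Ico j ((n + 1 - k) + j)).filter (fun m => P m)).card + 2 * k := by
      rw [cnt]
      calc ((Finset.range (n + 1 - ℓ)).filter (fun m => ∀ t : Fin ℓ, x (m + (t:ℕ)) = w t)).card
          ≤ (((Finset.Ico j ((n + 1 - k) + j)).filter (fun m => P m))
            ∪ (Finset.range j ∪ Finset.Ico ((n + 1 - k) + j) (n + 1 - ℓ))).card :=
            Finset.card_le_card h2
        _ ≤ ((Finset.Ico j ((n + 1 - k) + j)).filter (fun m => P m)).card
            + (Finset.range j ∪ Finset.Ico ((n + 1 - k) + j) (n + 1 - ℓ)).card :=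
            Finset.card_union_le _ _
        _ ≤ _ := by
            have := Finset.card_union_le (Finset.range j)
              (Finset.Ico ((n + 1 - k) + j) (n + 1 - ℓ))
            rw [Finset.card_range] at this
            rw [Nat.card_Ico] at this
            omega
    omega
  calc (k + 1 - ℓ) * cnt x w n = ∑ _j ∈ Finset.range (k + 1 - ℓ), cnt x w n := by
        rw [Finset.sum_const, Finset.card_range, smul_eq_mul]
  _ ≤ ∑ j ∈ Finset.range (k + 1 - ℓ), ((∑ i ∈ Finset.range (n + 1 - k),
        if (∀ t : Fin ℓ, x (i + j + (t : ℕ)) = w t) then 1 else 0) + 2 * k) :=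
      Finset.sum_le_sum key
  _ = _ := by
      rw [Finset.sum_add_distrib, Finset.sum_const, Finset.card_range, smul_eq_mul]

open scoped Classical in
noncomputable def fixEquiv {b k : ℕ} {ι : Type} (e : ι → Fin k) (he : Function.Injective e)
    (u : ι → Fin b) :
    {v : Fin k → Fin b // ∀ s, v (e s) = u s} ≃ ({i : Fin k // ∀ s, e s ≠ i} → Fin b) where
  toFun v i := v.1 i.1
  invFun g :=
    ⟨fun i => if h : ∃ s, e s = i then u h.choose else g ⟨i, fun s hs => h ⟨s, hs⟩⟩,
     by
      intro s
      have h : ∃ s', e s' = e s := ⟨s, rfl⟩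
      simp only [dif_pos h]
      exact congrArg u (he h.choose_spec)⟩
  left_inv := by
    rintro ⟨v, hv⟩
    ext i
    dsimp only
    split_ifs with h
    · have h2 : v (e h.choose) = u h.choose := hv _
      rw [h.choose_spec] at h2
      exact congrArg Fin.val h2.symm
    · rfl
  right_inv := by
    intro g
    funext i
    dsimp only
    rw [dif_neg]
    rintro ⟨s, hs⟩
    exact i.2 s hs

lemma card_fix {b k : ℕ} {ι : Type} [Fintype ι] (e : ι → Fin k) (he : Function.Injective e)
    (u : ι → Fin b) :
    ((Finset.univ : Finset (Fin k → Fin b)).filter (fun v => ∀ s, v (e s) = u s)).card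
      = b ^ (k - Fintype.card ι) := by
  classical
  have h1 : ((Finset.univ : Finset (Fin k → Fin b)).filter (fun v => ∀ s, v (e s) = u s)).card
      = Nat.card {v : Fin k → Fin b // ∀ s, v (e s) = u s} := by
    rw [Nat.card_eq_fintype_card, Fintype.card_subtype]
  rw [h1, Nat.card_congr (fixEquiv e he u)]
  rw [Nat.card_fun]
  have h2 : Nat.card {i : Fin k // ∀ s, e s ≠ i} = k - Fintype.card ι := by
    rw [Nat.card_eq_fintype_card]
    rw [Fintype.card_subtype]
    have h3 : (Finset.univ.filter (fun i : Fin k => ∀ s, e s ≠ i)).card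
        = (Finset.univ.filter (fun i : Fin k => ¬ ∃ s, e s = i)).card := by
      congr 1
      apply Finset.filter_congr
      intro i _
      push_neg
      rfl
    rw [h3, Finset.filter_not, Finset.card_sdiff_of_subset (Finset.filter_subset _ _)]
    have h4 : (Finset.univ.filter (fun i : Fin k => ∃ s, e s = i)).card = Fintype.card ι := by
      have : (Finset.univ.filter (fun i : Fin k => ∃ s, e s = i))
          = Finset.univ.image e := by
        ext i
        simp [eq_comm]
      rw [this, Finset.card_image_of_injective _ he, Finset.card_univ]
    rw [h4, Finset.card_univ, Fintype.card_fin]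
  rw [h2, Nat.card_eq_fintype_card, Fintype.card_fin]

section Windows
variable {b ℓ k : ℕ}

/-- the window embedding `t ↦ j + t`. -/
def ewin (ℓ : ℕ) {k : ℕ} (j : ℕ) (hj : j + ℓ ≤ k) : Fin ℓ → Fin k :=
  fun t => ⟨j + (t : ℕ), by have := t.2; omega⟩

lemma ewin_inj {j : ℕ} (hj : j + ℓ ≤ k) : Function.Injective (ewin ℓ j hj) := by
  intro t1 t2 h12
  have := congrArg Fin.val h12
  simp only [ewin] at this
  exact Fin.ext (by omega)

lemma extv_iff (hb : 0 < b) (v : Fin k → Fin b) (w : Fin ℓ → Fin b) {j : ℕ} (hj : j + ℓ ≤ k) :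
    (∀ t : Fin ℓ, extv hb v (j + (t : ℕ)) = w t) ↔ (∀ t, v (ewin ℓ j hj t) = w t) := by
  constructor
  · intro hyp t
    have h2 := hyp t
    rw [extv, dif_pos (show j + (t : ℕ) < k by have := t.2; omega)] at h2
    exact h2
  · intro hyp t
    rw [extv, dif_pos (show j + (t : ℕ) < k by have := t.2; omega)]
    exact hyp t

lemma card_one_window (hb : 0 < b) (w : Fin ℓ → Fin b) {j : ℕ} (hj : j + ℓ ≤ k) :
    ((Finset.univ : Finset (Fin k → Fin b)).filter
      (fun v => ∀ t : Fin ℓ, extv hb v (j + (t : ℕ)) = w t)).card = b ^ (k - ℓ) := by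
  classical
  have := card_fix (ewin ℓ j hj) (ewin_inj hj) w
  rw [Fintype.card_fin] at this
  rw [← this]
  congr 1
  ext v
  simp only [Finset.mem_filter, Finset.mem_univ, true_and]
  exact extv_iff hb v w hj

lemma card_two_window (hb : 0 < b) (w : Fin ℓ → Fin b) {j1 j2 : ℕ}
    (h12 : j1 + ℓ ≤ j2) (hj2 : j2 + ℓ ≤ k) :
    ((Finset.univ : Finset (Fin k → Fin b)).filter
      (fun v => (∀ t : Fin ℓ, extv hb v (j1 + (t : ℕ)) = w t)
        ∧ (∀ t : Fin ℓ, extv hb v (j2 + (t : ℕ)) = w t))).card = b ^ (k - (ℓ + ℓ)) := by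
  classical
  have hj1 : j1 + ℓ ≤ k := by omega
  set e : Fin ℓ ⊕ Fin ℓ → Fin k := Sum.elim (ewin ℓ j1 hj1) (ewin ℓ j2 hj2) with he_def
  have he : Function.Injective e := by
    intro s1 s2 hss
    rcases s1 with t1 | t1 <;> rcases s2 with t2 | t2 <;>
      rw [he_def] at hss <;> simp only [Sum.elim_inl, Sum.elim_inr] at hss <;>
      have hv := congrArg Fin.val hss <;> simp only [ewin] at hv
    · exact congrArg Sum.inl (Fin.ext (by omega))
    · exact absurd hv (by have := t1.2; have := t2.2; omega)
    · exact absurd hv (by have := t1.2; have := t2.2; omega)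
    · exact congrArg Sum.inr (Fin.ext (by omega))
  have := card_fix e he (Sum.elim w w)
  rw [Fintype.card_sum, Fintype.card_fin] at this
  rw [← this]
  congr 1
  ext v
  simp only [Finset.mem_filter, Finset.mem_univ, true_and]
  rw [extv_iff hb v w hj1, extv_iff hb v w hj2]
  rw [he_def]
  constructor
  · rintro ⟨h1, h2⟩ s
    rcases s with t | t
    · simpa using h1 t
    · simpa using h2 t
  · intro hyp
    exact ⟨fun t => by simpa using hyp (Sum.inl t), fun t => by simpa using hyp (Sum.inr t)⟩

end Windows

section Variance
variable {b ℓ k : ℕ}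

/-- indicator that `w` occurs at position `j` of the word `v`. -/
noncomputable def chi (hb : 0 < b) (w : Fin ℓ → Fin b) (j : ℕ) (v : Fin k → Fin b) : ℝ :=
  if (∀ t : Fin ℓ, extv hb v (j + (t : ℕ)) = w t) then 1 else 0

lemma chi_nonneg (hb : 0 < b) (w : Fin ℓ → Fin b) (j : ℕ) (v : Fin k → Fin b) :
    0 ≤ chi hb w j v := by
  rw [chi]; split_ifs <;> norm_num

lemma chi_le_one (hb : 0 < b) (w : Fin ℓ → Fin b) (j : ℕ) (v : Fin k → Fin b) :
    chi hb w j v ≤ 1 := by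
  rw [chi]; split_ifs <;> norm_num

lemma sum_chi (hb : 0 < b) (w : Fin ℓ → Fin b) {j : ℕ} (hj : j + ℓ ≤ k) :
    ∑ v : Fin k → Fin b, chi hb w j v = ((b ^ (k - ℓ) : ℕ) : ℝ) := by
  classical
  rw [← card_one_window hb w hj]
  rw [Finset.card_filter]
  push_cast
  apply Finset.sum_congr rfl
  intro v _
  rw [chi]

lemma sum_chi_mul (hb : 0 < b) (w : Fin ℓ → Fin b) {j1 j2 : ℕ}
    (h12 : j1 + ℓ ≤ j2) (hj2 : j2 + ℓ ≤ k) :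
    ∑ v : Fin k → Fin b, chi hb w j1 v * chi hb w j2 v = ((b ^ (k - (ℓ + ℓ)) : ℕ) : ℝ) := by
  classical
  rw [← card_two_window hb w h12 hj2]
  rw [Finset.card_filter]
  push_cast
  apply Finset.sum_congr rfl
  intro v _
  rw [chi, chi]
  split_ifs with h1 h2 h3 <;> norm_num <;> tauto

lemma acnt_cast (hb : 0 < b) (w : Fin ℓ → Fin b) (v : Fin k → Fin b) :
    ((Acnt hb w v : ℕ) : ℝ) = ∑ j ∈ Finset.range (k + 1 - ℓ), chi hb w j v := by
  classical
  rw [Acnt, cnt, Finset.card_filter]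
  push_cast
  apply Finset.sum_congr rfl
  intro j _
  rw [chi]

lemma variance_bound (hb : 0 < b) (hk : ℓ + ℓ ≤ k) (w : Fin ℓ → Fin b) :
    ∑ v : Fin k → Fin b,
        ((Acnt hb w v : ℝ) - ((k + 1 - ℓ : ℕ) : ℝ) * (b : ℝ) ^ (-(ℓ : ℤ))) ^ 2
      ≤ 2 * (ℓ : ℝ) * ((k + 1 - ℓ : ℕ) : ℝ) * ((b ^ (k - ℓ) : ℕ) : ℝ) := by
  classical
  set B : ℝ := (b : ℝ) with hB
  have hB0 : (0 : ℝ) < B := by rw [hB]; exact_mod_cast hb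
  set β : ℝ := (b : ℝ) ^ (-(ℓ : ℤ)) with hβ
  have hβ0 : 0 ≤ β := by rw [hβ]; positivity
  have hβB : β * B ^ ℓ = 1 := by
    rw [hβ, hB, ← zpow_natCast (b : ℝ) ℓ, ← zpow_add₀ (ne_of_gt (show (0:ℝ) < (b:ℝ) by exact_mod_cast hb))]
    simp
  have hpow1 : B ^ (k - ℓ) * B ^ ℓ = B ^ k := by
    rw [← pow_add]; congr 1; omega
  have hpow2 : B ^ (k - (ℓ + ℓ)) * B ^ ℓ = B ^ (k - ℓ) := by
    rw [← pow_add]; congr 1; omega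
  have f1 : β * B ^ k = B ^ (k - ℓ) := by
    calc β * B ^ k = B ^ (k - ℓ) * (β * B ^ ℓ) := by rw [← hpow1]; ring
    _ = B ^ (k - ℓ) := by rw [hβB, mul_one]
  have f2 : β * B ^ (k - ℓ) = B ^ (k - (ℓ + ℓ)) := by
    calc β * B ^ (k - ℓ) = B ^ (k - (ℓ + ℓ)) * (β * B ^ ℓ) := by rw [← hpow2]; ring
    _ = _ := by rw [hβB, mul_one]
  set K : ℕ := k + 1 - ℓ with hK
  have hcastpow : ∀ m : ℕ, ((b ^ m : ℕ) : ℝ) = B ^ m := by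
    intro m; rw [hB]; push_cast; ring
  have hcard : ∑ v : Fin k → Fin b, (1 : ℝ) = B ^ k := by
    rw [Finset.sum_const, Finset.card_univ, Fintype.card_fun, Fintype.card_fin,
      Fintype.card_fin, nsmul_eq_mul, mul_one, hcastpow]
  -- expand the square
  have hA : ∀ v : Fin k → Fin b, (Acnt hb w v : ℝ) - (K : ℝ) * β
      = ∑ j ∈ Finset.range K, (chi hb w j v - β) := by
    intro v
    rw [Finset.sum_sub_distrib, Finset.sum_const, Finset.card_range, ← acnt_cast, nsmul_eq_mul]
  have hexp : ∀ v : Fin k → Fin b,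
      ((Acnt hb w v : ℝ) - (K : ℝ) * β) ^ 2
        = ∑ j1 ∈ Finset.range K, ∑ j2 ∈ Finset.range K,
            (chi hb w j1 v - β) * (chi hb w j2 v - β) := by
    intro v
    rw [hA, sq, Finset.sum_mul_sum]
  rw [Finset.sum_congr rfl (fun v _ => hexp v), Finset.sum_comm]
  have hswap : ∀ j1 ∈ Finset.range K,
      ∑ v : Fin k → Fin b, ∑ j2 ∈ Finset.range K,
          (chi hb w j1 v - β) * (chi hb w j2 v - β)
        = ∑ j2 ∈ Finset.range K, ∑ v : Fin k → Fin b,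
            (chi hb w j1 v - β) * (chi hb w j2 v - β) := by
    intro j1 _
    rw [Finset.sum_comm]
  rw [Finset.sum_congr rfl hswap]
  -- the inner sum T j1 j2
  have hT : ∀ j1 j2 : ℕ,
      ∑ v : Fin k → Fin b, (chi hb w j1 v - β) * (chi hb w j2 v - β)
        = (∑ v : Fin k → Fin b, chi hb w j1 v * chi hb w j2 v)
          - β * (∑ v : Fin k → Fin b, chi hb w j1 v)
          - β * (∑ v : Fin k → Fin b, chi hb w j2 v)
          + β ^ 2 * B ^ k := by
    intro j1 j2
    have : ∀ v : Fin k → Fin b, (chi hb w j1 v - β) * (chi hb w j2 v - β)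
        = chi hb w j1 v * chi hb w j2 v - β * chi hb w j1 v - β * chi hb w j2 v + β ^ 2 := by
      intro v; ring
    rw [Finset.sum_congr rfl (fun v _ => this v)]
    rw [Finset.sum_add_distrib, Finset.sum_sub_distrib, Finset.sum_sub_distrib,
      ← Finset.mul_sum, ← Finset.mul_sum, Finset.sum_const, Finset.card_univ,
      Fintype.card_fun, Fintype.card_fin, Fintype.card_fin, nsmul_eq_mul, ← hcastpow]
    push_cast
    ring
  -- far pairs vanish
  have hfar : ∀ j1 j2, j1 < K → j2 < K → (j1 + ℓ ≤ j2 ∨ j2 + ℓ ≤ j1) →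
      ∑ v : Fin k → Fin b, (chi hb w j1 v - β) * (chi hb w j2 v - β) = 0 := by
    intro j1 j2 hj1 hj2 hor
    have hj1k : j1 + ℓ ≤ k := by omega
    have hj2k : j2 + ℓ ≤ k := by omega
    rcases hor with hor | hor
    · rw [hT, sum_chi_mul hb w hor hj2k, sum_chi hb w hj1k, sum_chi hb w hj2k,
        hcastpow, hcastpow]
      nlinarith [f1, f2]
    · have hcomm : ∀ v : Fin k → Fin b, chi hb w j1 v * chi hb w j2 v
          = chi hb w j2 v * chi hb w j1 v := fun v => mul_comm _ _
      rw [hT, Finset.sum_congr rfl (fun v _ => hcomm v),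
        sum_chi_mul hb w hor hj1k, sum_chi hb w hj1k, sum_chi hb w hj2k,
        hcastpow, hcastpow]
      nlinarith [f1, f2]
  -- all pairs are bounded
  have hnear : ∀ j1 j2, j1 < K → j2 < K →
      ∑ v : Fin k → Fin b, (chi hb w j1 v - β) * (chi hb w j2 v - β) ≤ B ^ (k - ℓ) := by
    intro j1 j2 hj1 hj2
    have hj1k : j1 + ℓ ≤ k := by omega
    have hj2k : j2 + ℓ ≤ k := by omega
    rw [hT]
    have hmm : ∑ v : Fin k → Fin b, chi hb w j1 v * chi hb w j2 v ≤ B ^ (k - ℓ) := by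
      calc ∑ v : Fin k → Fin b, chi hb w j1 v * chi hb w j2 v
          ≤ ∑ v : Fin k → Fin b, chi hb w j1 v := by
            apply Finset.sum_le_sum
            intro v _
            calc chi hb w j1 v * chi hb w j2 v ≤ chi hb w j1 v * 1 :=
              mul_le_mul_of_nonneg_left (chi_le_one hb w j2 v) (chi_nonneg hb w j1 v)
            _ = chi hb w j1 v := mul_one _
        _ = B ^ (k - ℓ) := by rw [sum_chi hb w hj1k, hcastpow]
    rw [sum_chi hb w hj1k, sum_chi hb w hj2k, hcastpow]
    nlinarith [hmm, f1, f2, hβ0, pow_nonneg (le_of_lt hB0) (k - ℓ)]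
  -- put it together
  have hinner : ∀ j1 ∈ Finset.range K,
      ∑ j2 ∈ Finset.range K, ∑ v : Fin k → Fin b,
          (chi hb w j1 v - β) * (chi hb w j2 v - β)
        ≤ 2 * (ℓ : ℝ) * B ^ (k - ℓ) := by
    intro j1 hj1
    rw [Finset.mem_range] at hj1
    rw [← Finset.sum_filter_add_sum_filter_not (Finset.range K)
      (fun j2 => j1 + ℓ ≤ j2 ∨ j2 + ℓ ≤ j1)]
    have hz : ∑ j2 ∈ (Finset.range K).filter (fun j2 => j1 + ℓ ≤ j2 ∨ j2 + ℓ ≤ j1),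
        ∑ v : Fin k → Fin b, (chi hb w j1 v - β) * (chi hb w j2 v - β) = 0 := by
      apply Finset.sum_eq_zero
      intro j2 hj2
      rw [Finset.mem_filter, Finset.mem_range] at hj2
      exact hfar j1 j2 hj1 hj2.1 hj2.2
    rw [hz, zero_add]
    have hcardnear : ((Finset.range K).filter
        (fun j2 => ¬(j1 + ℓ ≤ j2 ∨ j2 + ℓ ≤ j1))).card ≤ 2 * ℓ := by
      calc ((Finset.range K).filter (fun j2 => ¬(j1 + ℓ ≤ j2 ∨ j2 + ℓ ≤ j1))).card
          ≤ (Finset.Ico (j1 + 1 - ℓ) (j1 + ℓ)).card := by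
            apply Finset.card_le_card
            intro j2 hj2
            rw [Finset.mem_filter, Finset.mem_range] at hj2
            rw [Finset.mem_Ico]
            push_neg at hj2
            omega
      _ ≤ 2 * ℓ := by rw [Nat.card_Ico]; omega
    calc ∑ j2 ∈ (Finset.range K).filter (fun j2 => ¬(j1 + ℓ ≤ j2 ∨ j2 + ℓ ≤ j1)),
          ∑ v : Fin k → Fin b, (chi hb w j1 v - β) * (chi hb w j2 v - β)
        ≤ ∑ j2 ∈ (Finset.range K).filter (fun j2 => ¬(j1 + ℓ ≤ j2 ∨ j2 + ℓ ≤ j1)),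
            B ^ (k - ℓ) := by
          apply Finset.sum_le_sum
          intro j2 hj2
          rw [Finset.mem_filter, Finset.mem_range] at hj2
          exact hnear j1 j2 hj1 hj2.1
      _ = (((Finset.range K).filter
            (fun j2 => ¬(j1 + ℓ ≤ j2 ∨ j2 + ℓ ≤ j1))).card : ℝ) * B ^ (k - ℓ) := by
          rw [Finset.sum_const, nsmul_eq_mul]
      _ ≤ 2 * (ℓ : ℝ) * B ^ (k - ℓ) := by
          apply mul_le_mul_of_nonneg_right _ (by positivity)
          exact_mod_cast hcardnear
  calc ∑ j1 ∈ Finset.range K, ∑ j2 ∈ Finset.range K, ∑ v : Fin k → Fin b,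
        (chi hb w j1 v - β) * (chi hb w j2 v - β)
      ≤ ∑ _j1 ∈ Finset.range K, 2 * (ℓ : ℝ) * B ^ (k - ℓ) := Finset.sum_le_sum hinner
    _ = (K : ℝ) * (2 * (ℓ : ℝ) * B ^ (k - ℓ)) := by
        rw [Finset.sum_const, Finset.card_range, nsmul_eq_mul]
    _ = 2 * (ℓ : ℝ) * (K : ℝ) * ((b ^ (k - ℓ) : ℕ) : ℝ) := by rw [hcastpow]; ring

end Variance

open scoped Classical in
lemma chebyshev {b ℓ k : ℕ} (hb : 0 < b) (hk : ℓ + ℓ ≤ k) (w : Fin ℓ → Fin b)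
    (ε₁ : ℝ) (hε : 0 ≤ ε₁) :
    (((Finset.univ : Finset (Fin k → Fin b)).filter
        (fun v => ε₁ * ((k + 1 - ℓ : ℕ) : ℝ)
          ≤ |(Acnt hb w v : ℝ) - ((k + 1 - ℓ : ℕ) : ℝ) * (b : ℝ) ^ (-(ℓ : ℤ))|)).card : ℝ)
        * (ε₁ * ((k + 1 - ℓ : ℕ) : ℝ)) ^ 2
      ≤ 2 * (ℓ : ℝ) * ((k + 1 - ℓ : ℕ) : ℝ) * ((b ^ (k - ℓ) : ℕ) : ℝ) := by
  classical
  set β : ℝ := (b : ℝ) ^ (-(ℓ : ℤ))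
  set K : ℝ := ((k + 1 - ℓ : ℕ) : ℝ)
  set bad := (Finset.univ : Finset (Fin k → Fin b)).filter
      (fun v => ε₁ * K ≤ |(Acnt hb w v : ℝ) - K * β|) with hbad
  calc (bad.card : ℝ) * (ε₁ * K) ^ 2
      = ∑ _v ∈ bad, (ε₁ * K) ^ 2 := by rw [Finset.sum_const, nsmul_eq_mul]
    _ ≤ ∑ v ∈ bad, ((Acnt hb w v : ℝ) - K * β) ^ 2 := by
        apply Finset.sum_le_sum
        intro v hv
        rw [hbad, Finset.mem_filter] at hv
        calc (ε₁ * K) ^ 2 ≤ |(Acnt hb w v : ℝ) - K * β| ^ 2 := by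
              have h0 : 0 ≤ ε₁ * K := mul_nonneg hε (Nat.cast_nonneg _)
              exact pow_le_pow_left₀ h0 hv.2 2
          _ = ((Acnt hb w v : ℝ) - K * β) ^ 2 := sq_abs _
    _ ≤ ∑ v : Fin k → Fin b, ((Acnt hb w v : ℝ) - K * β) ^ 2 :=
        Finset.sum_le_sum_of_subset_of_nonneg (Finset.filter_subset _ _)
          (fun v _ _ => sq_nonneg _)
    _ ≤ 2 * (ℓ : ℝ) * K * ((b ^ (k - ℓ) : ℕ) : ℝ) := variance_bound hb hk w

/-- `Z b x lam i k`: proportion of words of length `k` occurring exactly `i` times in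
`x[1..⌊lam·b^k⌋+k-1]`. -/
noncomputable def Z (b : ℕ) (x : ℕ → Fin b) (lam : ℝ) (i k : ℕ) : ℝ :=
  (Nat.card {w : Fin k → Fin b // occCount x w (⌊lam * (b : ℝ) ^ k⌋₊ + k - 1) = i} : ℝ)
    / (b : ℝ) ^ k

/-- `x` is Borel normal to base `b`: every (nonempty) word occurs with limiting
frequency `b^{-ℓ}`. -/
def BorelNormal (b : ℕ) (x : ℕ → Fin b) : Prop :=
  ∀ (ℓ : ℕ), 1 ≤ ℓ → ∀ w : Fin ℓ → Fin b,
    Filter.Tendsto (fun n : ℕ => (occCount x w n : ℝ) / n) Filter.atTop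
      (nhds ((b : ℝ) ^ (-(ℓ : ℤ))))

set_option maxHeartbeats 2000000 in
theorem pyatetskii_shapiro (b : ℕ) (hb : 2 ≤ b) (x : ℕ → Fin b)
    (C : ℝ) (hC : 0 < C)
    (h : ∀ (ℓ : ℕ), 1 ≤ ℓ → ∀ w : Fin ℓ → Fin b,
      Filter.limsup (fun n : ℕ => (occCount x w n : ℝ) / n) Filter.atTop
        ≤ C * (b : ℝ) ^ (-(ℓ : ℤ))) :
    BorelNormal b x := by
  classical
  intro ℓ hl w
  have hb0 : 0 < b := by omega
  have hB0 : (0:ℝ) < (b:ℝ) := by exact_mod_cast hb0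
  have hB1 : (1:ℝ) ≤ (b:ℝ) := by exact_mod_cast (by omega : 1 ≤ b)
  set β : ℝ := (b:ℝ) ^ (-(ℓ:ℤ)) with hβdef
  have hβ0 : 0 < β := by rw [hβdef]; positivity
  have hβ1 : β ≤ 1 := by
    rw [hβdef]
    exact zpow_le_one_of_nonpos₀ hB1 (by omega)
  have hfun : (fun n : ℕ => (occCount x w n : ℝ) / n) = fun n : ℕ => (cnt x w n : ℝ) / n := by
    funext n; rw [occCount_eq]
  rw [hfun, Metric.tendsto_atTop]
  intro ε hε
  set ε' := min ε β with hε'def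
  have hε'0 : 0 < ε' := lt_min hε hβ0
  have hε'ε : ε' ≤ ε := min_le_left _ _
  have hε'β : ε' ≤ β := min_le_right _ _
  have hε'1 : ε' ≤ 1 := le_trans hε'β hβ1
  set ε₁ := ε'/4 with hε₁def
  have hε₁0 : 0 < ε₁ := by positivity
  -- choose the block length k
  obtain ⟨k, hk2l, hk1, hlk, hKbig⟩ :
      ∃ k : ℕ, ℓ + ℓ ≤ k ∧ 1 ≤ k ∧ ℓ ≤ k ∧
        16*(ℓ:ℝ)*C ≤ ε₁^2*ε'*((k+1-ℓ : ℕ):ℝ) := by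
    set R : ℝ := 16*(ℓ:ℝ)*C/(ε₁^2*ε') with hR
    refine ⟨ℓ + ℓ + ⌈R⌉₊, by omega, by omega, by omega, ?_⟩
    have hceil := Nat.le_ceil R
    have h2 : (⌈R⌉₊ : ℝ) ≤ ((ℓ + ℓ + ⌈R⌉₊ + 1 - ℓ : ℕ):ℝ) := by
      exact_mod_cast (by omega : ⌈R⌉₊ ≤ ℓ + ℓ + ⌈R⌉₊ + 1 - ℓ)
    have hpos : (0:ℝ) < ε₁^2*ε' := by positivity
    have h3 : R * (ε₁^2*ε') = 16*(ℓ:ℝ)*C := by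
      rw [hR]; field_simp
    calc 16*(ℓ:ℝ)*C = R * (ε₁^2*ε') := h3.symm
      _ ≤ ((ℓ + ℓ + ⌈R⌉₊ + 1 - ℓ : ℕ):ℝ) * (ε₁^2*ε') :=
          mul_le_mul_of_nonneg_right (hceil.trans h2) hpos.le
      _ = ε₁^2*ε'*((ℓ + ℓ + ⌈R⌉₊ + 1 - ℓ : ℕ):ℝ) := mul_comm _ _
  set K : ℝ := ((k+1-ℓ : ℕ):ℝ) with hKdef
  have hK0 : (0:ℝ) < K := by
    rw [hKdef]; exact_mod_cast (by omega : 0 < k+1-ℓ)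
  set bad : Finset (Fin k → Fin b) :=
    Finset.univ.filter (fun v => ε₁ * K ≤ |(Acnt hb0 w v : ℝ) - K * β|) with hbaddef
  have hcheb := chebyshev hb0 hk2l w ε₁ (le_of_lt hε₁0)
  rw [← hKdef, ← hβdef, ← hbaddef] at hcheb
  -- bad mass bound
  have hBkl : ((b ^ (k-ℓ) : ℕ):ℝ) * (b:ℝ)^(-(k:ℤ)) = β := by
    rw [hβdef]
    rw [Nat.cast_pow, ← zpow_natCast (b:ℝ) (k-ℓ), ← zpow_add₀ (ne_of_gt hB0)]
    congr 1
    omega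
  have hbadmass : C * (bad.card:ℝ) * (b:ℝ)^(-(k:ℤ)) ≤ ε'/8 := by
    have hpos : (0:ℝ) < ε₁^2 * K := by positivity
    have step1 : (bad.card:ℝ) * (ε₁^2*K) ≤ 2*(ℓ:ℝ)*((b^(k-ℓ):ℕ):ℝ) := by
      have h2 : (bad.card:ℝ) * (ε₁^2*K) * K ≤ (2*(ℓ:ℝ)*((b^(k-ℓ):ℕ):ℝ)) * K := by
        calc (bad.card:ℝ) * (ε₁^2*K) * K = (bad.card:ℝ) * (ε₁*K)^2 := by ring
          _ ≤ 2*(ℓ:ℝ)*K*((b^(k-ℓ):ℕ):ℝ) := hcheb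
          _ = (2*(ℓ:ℝ)*((b^(k-ℓ):ℕ):ℝ)) * K := by ring
      exact le_of_mul_le_mul_right h2 hK0
    have step2 : (C * (bad.card:ℝ) * (b:ℝ)^(-(k:ℤ))) * (ε₁^2*K) ≤ 2*(ℓ:ℝ)*C*β := by
      calc (C * (bad.card:ℝ) * (b:ℝ)^(-(k:ℤ))) * (ε₁^2*K)
          = (C*(b:ℝ)^(-(k:ℤ))) * ((bad.card:ℝ) * (ε₁^2*K)) := by ring
        _ ≤ (C*(b:ℝ)^(-(k:ℤ))) * (2*(ℓ:ℝ)*((b^(k-ℓ):ℕ):ℝ)) := by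
            apply mul_le_mul_of_nonneg_left step1 (by positivity)
        _ = 2*(ℓ:ℝ)*C*(((b^(k-ℓ):ℕ):ℝ) * (b:ℝ)^(-(k:ℤ))) := by ring
        _ = 2*(ℓ:ℝ)*C*β := by rw [hBkl]
    have step3 : 2*(ℓ:ℝ)*C*β ≤ (ε'/8)*(ε₁^2*K) := by
      have hl0 : (0:ℝ) ≤ (ℓ:ℝ) := Nat.cast_nonneg _
      have hn2 : (0:ℝ) ≤ 2*(ℓ:ℝ)*C := by positivity
      have hb2 : 2*(ℓ:ℝ)*C*β ≤ 2*(ℓ:ℝ)*C := by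
        calc 2*(ℓ:ℝ)*C*β = (2*(ℓ:ℝ)*C)*β := by ring
          _ ≤ (2*(ℓ:ℝ)*C)*1 := mul_le_mul_of_nonneg_left hβ1 hn2
          _ = 2*(ℓ:ℝ)*C := mul_one _
      linarith [hKbig, hb2]
    exact le_of_mul_le_mul_right (le_trans step2 step3) hpos
  -- eventual bounds
  have hev_bad : ∀ᶠ n in Filter.atTop, ∀ v ∈ bad,
      (cnt x v n : ℝ)/n < C*(b:ℝ)^(-(k:ℤ)) + (ε'/8)/(b:ℝ)^k := by
    rw [Filter.eventually_all_finset]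
    intro v _
    have hlim := h k (by omega) v
    have hfe : (fun n : ℕ => (occCount x v n:ℝ)/n) = fun n : ℕ => (cnt x v n:ℝ)/n :=
      funext fun n => by rw [occCount_eq]
    rw [hfe] at hlim
    apply eventually_lt_of_limsup_lt
    · apply lt_of_le_of_lt hlim
      have : (0:ℝ) < (ε'/8)/(b:ℝ)^k := by positivity
      linarith
    · refine isBoundedUnder_of ⟨1, fun n => ?_⟩
      apply div_le_one_of_le₀
      · have h1 : cnt x v n ≤ n := le_trans (cnt_le x v n) (by omega)
        exact_mod_cast h1
      · positivity
  have hev_n : ∀ᶠ n : ℕ in Filter.atTop, 16*(k:ℝ) ≤ ε' * (n:ℝ) := by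
    have ht : Filter.Tendsto (fun n : ℕ => ε' * (n:ℝ)) Filter.atTop Filter.atTop :=
      Filter.Tendsto.const_mul_atTop hε'0 tendsto_natCast_atTop_atTop
    exact ht.eventually_ge_atTop _
  have hev_k : ∀ᶠ n in Filter.atTop, k ≤ n := Filter.eventually_ge_atTop k
  have hev_1 : ∀ᶠ n in Filter.atTop, 1 ≤ n := Filter.eventually_ge_atTop 1
  have hev : ∀ᶠ n in Filter.atTop, dist ((cnt x w n : ℝ)/n) β < ε := by
    filter_upwards [hev_bad, hev_n, hev_k, hev_1] with n hbadn hn16 hkn h1n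
    have hn0 : (0:ℝ) < n := by exact_mod_cast h1n
    set F : ℝ := (cnt x w n:ℝ)/n with hF
    set f : (Fin k → Fin b) → ℝ := fun v => (cnt x v n:ℝ)/n with hf
    have hf0 : ∀ v, 0 ≤ f v := fun v => by rw [hf]; positivity
    -- total frequency
    have e1 : ∑ v : Fin k → Fin b, f v = ((n+1-k:ℕ):ℝ)/n := by
      rw [hf, ← Finset.sum_div]
      congr 1
      rw [← Nat.cast_sum]
      exact_mod_cast congrArg (Nat.cast : ℕ → ℝ) (sum_cnt x k n)
    have hsumall_le : ∑ v : Fin k → Fin b, f v ≤ 1 := by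
      rw [e1, div_le_one hn0]
      exact_mod_cast (by omega : n + 1 - k ≤ n)
    have hsumall_ge : 1 - ε'/8 ≤ ∑ v : Fin k → Fin b, f v := by
      rw [e1, le_div_iff₀ hn0]
      have hcast : ((n+1-k:ℕ):ℝ) ≥ (n:ℝ) - k := by
        have h4 : ((n+1-k:ℕ):ℝ) = (n:ℝ) + 1 - k := by
          rw [Nat.cast_sub (by omega)]
          push_cast; ring
        rw [h4]; linarith
      have hk0' : (0:ℝ) ≤ (k:ℝ) := Nat.cast_nonneg _
      linarith
    -- bad frequency
    have hbadsum : ∑ v ∈ bad, f v ≤ ε'/4 := by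
      have hcard_le : (bad.card : ℝ) ≤ (b:ℝ)^k := by
        have h1 : bad.card ≤ b^k := by
          calc bad.card ≤ (Finset.univ : Finset (Fin k → Fin b)).card :=
              Finset.card_filter_le _ _
            _ = b^k := by rw [Finset.card_univ, Fintype.card_fun, Fintype.card_fin, Fintype.card_fin]
        exact_mod_cast h1
      have hδ0 : (0:ℝ) ≤ (ε'/8)/(b:ℝ)^k := by positivity
      calc ∑ v ∈ bad, f v ≤ ∑ _v ∈ bad, (C*(b:ℝ)^(-(k:ℤ)) + (ε'/8)/(b:ℝ)^k) :=
            Finset.sum_le_sum (fun v hv => le_of_lt (hbadn v hv))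
        _ = (bad.card:ℝ) * (C*(b:ℝ)^(-(k:ℤ)) + (ε'/8)/(b:ℝ)^k) := by
            rw [Finset.sum_const, nsmul_eq_mul]
        _ = C*(bad.card:ℝ)*(b:ℝ)^(-(k:ℤ)) + (bad.card:ℝ)*((ε'/8)/(b:ℝ)^k) := by ring
        _ ≤ ε'/8 + ε'/8 := by
            have h2 : (bad.card:ℝ)*((ε'/8)/(b:ℝ)^k) ≤ (b:ℝ)^k*((ε'/8)/(b:ℝ)^k) :=
              mul_le_mul_of_nonneg_right hcard_le hδ0
            have h3 : (b:ℝ)^k*((ε'/8)/(b:ℝ)^k) = ε'/8 := by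
              field_simp
            linarith [hbadmass]
        _ = ε'/4 := by ring
    -- window inequalities over ℝ
    have hNat1 := sum_aI_le hlk x w n
    have hNat2 := le_sum_aI hlk x w n
    have hNat0 := sum_Acnt_cnt (k := k) hb0 w x n
    rw [← hNat0] at hNat1 hNat2
    have h2 : ∑ v : Fin k → Fin b, (Acnt hb0 w v:ℝ) * f v
        = (∑ v : Fin k → Fin b, (Acnt hb0 w v:ℝ) * (cnt x v n:ℝ))/n := by
      rw [Finset.sum_div]
      apply Finset.sum_congr rfl
      intro v _
      rw [hf, mul_div_assoc]
    have hup : ∑ v : Fin k → Fin b, (Acnt hb0 w v:ℝ) * f v ≤ K * F := by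
      have h1 : ∑ v : Fin k → Fin b, (Acnt hb0 w v:ℝ) * (cnt x v n:ℝ)
          ≤ K * (cnt x w n:ℝ) := by
        rw [hKdef]
        exact_mod_cast hNat1
      calc ∑ v : Fin k → Fin b, (Acnt hb0 w v:ℝ) * f v
          = (∑ v : Fin k → Fin b, (Acnt hb0 w v:ℝ) * (cnt x v n:ℝ))/n := h2
        _ ≤ (K * (cnt x w n:ℝ))/n := by gcongr
        _ = K * F := by rw [hF, mul_div_assoc]
    have hdown : K * F ≤ (∑ v : Fin k → Fin b, (Acnt hb0 w v:ℝ) * f v) + K*(ε'/8) := by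
      have h1 : K * (cnt x w n:ℝ)
          ≤ (∑ v : Fin k → Fin b, (Acnt hb0 w v:ℝ) * (cnt x v n:ℝ)) + K*(2*(k:ℝ)) := by
        rw [hKdef]
        exact_mod_cast hNat2
      have h3 : (2*(k:ℝ))/n ≤ ε'/8 := by
        rw [div_le_div_iff₀ hn0 (by norm_num : (0:ℝ) < 8)]
        linarith
      calc K * F = (K * (cnt x w n:ℝ))/n := by rw [hF, mul_div_assoc]
        _ ≤ ((∑ v : Fin k → Fin b, (Acnt hb0 w v:ℝ) * (cnt x v n:ℝ)) + K*(2*(k:ℝ)))/n := by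
            gcongr
        _ = (∑ v : Fin k → Fin b, (Acnt hb0 w v:ℝ) * (cnt x v n:ℝ))/n + K*((2*(k:ℝ))/n) := by
            rw [add_div, mul_div_assoc]
        _ ≤ (∑ v : Fin k → Fin b, (Acnt hb0 w v:ℝ) * f v) + K*(ε'/8) := by
            rw [← h2]
            exact add_le_add_right (mul_le_mul_of_nonneg_left h3 hK0.le) _
    -- good and bad words
    have hA0 : ∀ v : Fin k → Fin b, (0:ℝ) ≤ (Acnt hb0 w v:ℝ) := fun v => Nat.cast_nonneg _
    have hAK : ∀ v : Fin k → Fin b, (Acnt hb0 w v:ℝ) ≤ K := by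
      intro v
      rw [hKdef]
      exact_mod_cast Acnt_le hb0 w v
    have hsplitA : ∑ v : Fin k → Fin b, (Acnt hb0 w v:ℝ) * f v
        = (∑ v ∈ bad, (Acnt hb0 w v:ℝ) * f v)
          + ∑ v ∈ Finset.univ.filter (fun v : Fin k → Fin b =>
              ¬(ε₁ * K ≤ |(Acnt hb0 w v : ℝ) - K * β|)), (Acnt hb0 w v:ℝ) * f v := by
      rw [hbaddef]
      exact (Finset.sum_filter_add_sum_filter_not _ _ _).symm
    have hsplitf : ∑ v : Fin k → Fin b, f v
        = (∑ v ∈ bad, f v)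
          + ∑ v ∈ Finset.univ.filter (fun v : Fin k → Fin b =>
              ¬(ε₁ * K ≤ |(Acnt hb0 w v : ℝ) - K * β|)), f v := by
      rw [hbaddef]
      exact (Finset.sum_filter_add_sum_filter_not _ _ _).symm
    set good : Finset (Fin k → Fin b) := Finset.univ.filter (fun v : Fin k → Fin b =>
        ¬(ε₁ * K ≤ |(Acnt hb0 w v : ℝ) - K * β|)) with hgooddef
    have hgoodb : ∀ v ∈ good, (β-ε₁)*K ≤ (Acnt hb0 w v:ℝ) ∧ (Acnt hb0 w v:ℝ) ≤ (β+ε₁)*K := by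
      intro v hv
      rw [hgooddef, Finset.mem_filter] at hv
      have h4 : |(Acnt hb0 w v : ℝ) - K * β| < ε₁ * K := lt_of_not_ge hv.2
      rw [abs_lt] at h4
      constructor <;> [linarith [h4.1]; linarith [h4.2]]
    have hgoodf_le : ∑ v ∈ good, f v ≤ 1 := by
      refine le_trans ?_ hsumall_le
      exact Finset.sum_le_sum_of_subset_of_nonneg (Finset.filter_subset _ _)
        (fun v _ _ => hf0 v)
    have hgoodf_ge : 1 - 3*ε'/8 ≤ ∑ v ∈ good, f v := by
      linarith [hbadsum, hsumall_ge, hsplitf]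
    have hβε : 0 ≤ β - ε₁ := by
      rw [hε₁def]
      linarith
    -- upper bound for F
    have hup2 : K * F ≤ K * (β + ε₁ + 3*ε'/8) := by
      have hb1' : ∑ v ∈ bad, (Acnt hb0 w v:ℝ) * f v ≤ K * ∑ v ∈ bad, f v := by
        rw [Finset.mul_sum]
        exact Finset.sum_le_sum (fun v _ => mul_le_mul_of_nonneg_right (hAK v) (hf0 v))
      have hg1 : ∑ v ∈ good, (Acnt hb0 w v:ℝ) * f v ≤ (β+ε₁)*K * ∑ v ∈ good, f v := by
        rw [Finset.mul_sum]
        exact Finset.sum_le_sum (fun v hv =>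
          mul_le_mul_of_nonneg_right ((hgoodb v hv).2) (hf0 v))
      have hbadK : K * ∑ v ∈ bad, f v ≤ K * (ε'/4) :=
        mul_le_mul_of_nonneg_left hbadsum hK0.le
      have hgoodK : (β+ε₁)*K * ∑ v ∈ good, f v ≤ (β+ε₁)*K * 1 :=
        mul_le_mul_of_nonneg_left hgoodf_le (by positivity)
      have hsA := hsplitA
      calc K * F ≤ (∑ v : Fin k → Fin b, (Acnt hb0 w v:ℝ) * f v) + K*(ε'/8) := hdown
        _ = (∑ v ∈ bad, (Acnt hb0 w v:ℝ) * f v)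
            + (∑ v ∈ good, (Acnt hb0 w v:ℝ) * f v) + K*(ε'/8) := by rw [hsA]
        _ ≤ K * (ε'/4) + (β+ε₁)*K*1 + K*(ε'/8) := by
            have := le_trans hb1' hbadK
            have := le_trans hg1 hgoodK
            linarith
        _ = K * (β + ε₁ + 3*ε'/8) := by ring
    have hFup : F ≤ β + ε₁ + 3*ε'/8 := le_of_mul_le_mul_left hup2 hK0
    -- lower bound for F
    have hdown2 : K * (β - ε₁ - 3*ε'/8) ≤ K * F := by
      have hg2 : (β-ε₁)*K * ∑ v ∈ good, f v ≤ ∑ v ∈ good, (Acnt hb0 w v:ℝ) * f v := by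
        rw [Finset.mul_sum]
        exact Finset.sum_le_sum (fun v hv =>
          mul_le_mul_of_nonneg_right ((hgoodb v hv).1) (hf0 v))
      have hbad0 : 0 ≤ ∑ v ∈ bad, (Acnt hb0 w v:ℝ) * f v :=
        Finset.sum_nonneg (fun v _ => mul_nonneg (hA0 v) (hf0 v))
      have hg3 : (β-ε₁)*K * (1 - 3*ε'/8) ≤ (β-ε₁)*K * ∑ v ∈ good, f v :=
        mul_le_mul_of_nonneg_left hgoodf_ge (by positivity)
      have hsA := hsplitA
      have hchain : (β-ε₁)*K * (1 - 3*ε'/8) ≤ K * F := by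
        calc (β-ε₁)*K * (1 - 3*ε'/8) ≤ (β-ε₁)*K * ∑ v ∈ good, f v := hg3
          _ ≤ ∑ v ∈ good, (Acnt hb0 w v:ℝ) * f v := hg2
          _ ≤ ∑ v : Fin k → Fin b, (Acnt hb0 w v:ℝ) * f v := by rw [hsA]; linarith
          _ ≤ K * F := hup
      have hfinal : K * (β - ε₁ - 3*ε'/8) ≤ (β-ε₁)*K * (1 - 3*ε'/8) := by
        have hβε1 : β - ε₁ ≤ 1 := by linarith
        have h9 : 0 ≤ K * (3*ε'/8) * (1 - (β-ε₁)) :=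
          mul_nonneg (mul_nonneg hK0.le (by linarith)) (by linarith)
        linarith [h9]
      linarith
    have hFdown : β - ε₁ - 3*ε'/8 ≤ F := le_of_mul_le_mul_left hdown2 hK0
    -- conclude
    rw [Real.dist_eq, abs_lt]
    constructor
    · rw [hε₁def] at hFdown
      linarith
    · rw [hε₁def] at hFup
      linarith
  obtain ⟨N, hN⟩ := Filter.eventually_atTop.1 hev
  exact ⟨N, hN⟩
end

section
/- Every infinite de Bruijn sequence over a b-symbol alphabet (b ≥ 3) fails to be 1-Poisson generic: for such a sequence x, Z^1_{1,k}(x) → 1 as k → ∞, whereas 1-Poisson genericity would require the limit e^{-1}·1/1! = 1/e. -/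
open Filter

/-- Cyclic occurrence count of the length-`ℓ` word `w` among the `n` cyclic factors of
`v[0..n)`. -/
noncomputable def cycOcc {b : ℕ} (n : ℕ) (v : ℕ → Fin b) {ℓ : ℕ} (w : Fin ℓ → Fin b) : ℕ :=
  Nat.card {j : ℕ // j < n ∧ ∀ t : Fin ℓ, v ((j + (t : ℕ)) % n) = w t}

/-- Auxiliary: `Nat.card` of a bounded subtype of `ℕ` equals a `Finset` filter card. -/
lemma card_subtype_lt (N : ℕ) (P : ℕ → Prop) [DecidablePred P] :
    Nat.card {j : ℕ // j < N ∧ P j} = ((Finset.range N).filter P).card := by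
  have e : {j : ℕ // j < N ∧ P j} ≃ {j // j ∈ (Finset.range N).filter P} :=
    Equiv.subtypeEquivRight (by intro j; simp [Finset.mem_filter, Finset.mem_range])
  rw [Nat.card_congr e, Nat.card_eq_fintype_card, Fintype.card_coe]

theorem deBruijn_not_poisson_generic (b : ℕ) (hb : 3 ≤ b) (x : ℕ → Fin b)
    (hdb : ∀ (k : ℕ) (w : Fin k → Fin b), 1 ≤ k → cycOcc (b ^ k) x w = 1) :
    Tendsto (fun k : ℕ => Z b x 1 1 k) atTop (nhds 1) ∧
    ¬ (∀ i : ℕ, Tendsto (fun k : ℕ => Z b x 1 i k) atTop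
        (nhds (Real.exp (-1) * (1 : ℝ) ^ i / (Nat.factorial i : ℝ)))) := by
  classical
  have hb1 : (1 : ℕ) < b := by omega
  have hbR : (0 : ℝ) < (b : ℝ) := by positivity
  -- Step 1: the key bounds, for every k ≥ 1.
  have key : ∀ k : ℕ, 1 ≤ k →
      1 - 2 * (k : ℝ) / (b : ℝ) ^ k ≤ Z b x 1 1 k ∧ Z b x 1 1 k ≤ 1 := by
    intro k hk
    set N := b ^ k with hN
    have hkN : k < N := Nat.lt_pow_self hb1
    have hN1 : 1 ≤ N := by omega
    have hNR : (0 : ℝ) < (N : ℝ) := by exact_mod_cast Nat.pos_of_ne_zero (by omega)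
    -- linear and cyclic words starting at position j
    set lw : ℕ → Fin k → Fin b := fun j t => x (j + (t : ℕ)) with hlw
    set cw : ℕ → Fin k → Fin b := fun j t => x ((j + (t : ℕ)) % N) with hcw
    -- occCount as a Finset card
    have hocc : ∀ w : Fin k → Fin b, occCount x w (N + k - 1)
        = ((Finset.range N).filter (fun j => lw j = w)).card := by
      intro w
      unfold occCount
      rw [← card_subtype_lt]
      apply Nat.card_congr
      apply Equiv.subtypeEquivRight
      intro j
      constructor
      · rintro ⟨h1, h2⟩
        exact ⟨by omega, funext h2⟩
      · rintro ⟨h1, h2⟩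
        exact ⟨by omega, fun t => congrFun h2 t⟩
    -- cyclic count as a Finset card, equal to 1
    have hcyc : ∀ w : Fin k → Fin b,
        ((Finset.range N).filter (fun j => cw j = w)).card = 1 := by
      intro w
      have := hdb k w hk
      unfold cycOcc at this
      rw [← this, ← card_subtype_lt]
      apply Nat.card_congr
      apply Equiv.subtypeEquivRight
      intro j
      constructor
      · rintro ⟨h1, h2⟩
        exact ⟨h1, fun t => congrFun h2 t⟩
      · rintro ⟨h1, h2⟩
        exact ⟨h1, funext h2⟩
    -- good positions: the linear and cyclic words coincide
    have hgood : ∀ j : ℕ, j + k ≤ N → lw j = cw j := by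
      intro j hj
      funext t
      have ht : j + (t : ℕ) < N := by have := t.2; omega
      simp [hlw, hcw, Nat.mod_eq_of_lt ht]
    -- bad positions
    set B : Finset ℕ := (Finset.range N).filter (fun j => N < j + k) with hBdef
    have hBcard : B.card ≤ k - 1 := by
      have hsub : B ⊆ Finset.Ico (N - k + 1) N := by
        intro j hj
        simp only [hBdef, Finset.mem_filter, Finset.mem_range] at hj
        simp only [Finset.mem_Ico]
        omega
      calc B.card ≤ (Finset.Ico (N - k + 1) N).card := Finset.card_le_card hsub
        _ = N - (N - k + 1) := by rw [Nat.card_Ico]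
        _ ≤ k - 1 := by omega
    set W : Finset (Fin k → Fin b) := B.image lw ∪ B.image cw with hWdef
    have hWcard : W.card ≤ 2 * (k - 1) := by
      calc W.card ≤ (B.image lw).card + (B.image cw).card := Finset.card_union_le _ _
        _ ≤ B.card + B.card := by
            gcongr <;> exact Finset.card_image_le
        _ ≤ 2 * (k - 1) := by omega
    -- words outside W occur exactly once
    have honce : ∀ w : Fin k → Fin b, w ∉ W → occCount x w (N + k - 1) = 1 := by
      intro w hw
      rw [hocc, ← hcyc w]
      congr 1
      apply Finset.filter_congr
      intro j hj
      simp only [Finset.mem_range] at hj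
      by_cases hjk : j + k ≤ N
      · rw [hgood j hjk]
      · have hjB : j ∈ B := by
          simp only [hBdef, Finset.mem_filter, Finset.mem_range]; omega
        constructor
        · intro h
          exfalso; apply hw
          rw [hWdef, ← h]
          exact Finset.mem_union_left _ (Finset.mem_image_of_mem lw hjB)
        · intro h
          exfalso; apply hw
          rw [hWdef, ← h]
          exact Finset.mem_union_right _ (Finset.mem_image_of_mem cw hjB)
    -- the set of exactly-once words
    set G : Finset (Fin k → Fin b) := Finset.univ.filter
        (fun w => occCount x w (N + k - 1) = 1) with hGdef
    have hGsub : Finset.univ \ W ⊆ G := by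
      intro w hw
      simp only [Finset.mem_sdiff] at hw
      simp only [hGdef, Finset.mem_filter, Finset.mem_univ, true_and]
      exact honce w hw.2
    have hcardUniv : (Finset.univ : Finset (Fin k → Fin b)).card = N := by
      simp [Finset.card_univ, hN]
    have hGlb : N - 2 * (k - 1) ≤ G.card := by
      calc N - 2 * (k - 1) = Finset.univ.card - 2 * (k - 1) := by rw [hcardUniv]
        _ ≤ Finset.univ.card - W.card := by omega
        _ ≤ (Finset.univ \ W).card := Finset.le_card_sdiff _ _
        _ ≤ G.card := Finset.card_le_card hGsub
    have hGub : G.card ≤ N := by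
      rw [← hcardUniv]; exact Finset.card_le_card (Finset.filter_subset _ _)
    -- identify Z with G.card / N
    have hfloor : ⌊(1 : ℝ) * (b : ℝ) ^ k⌋₊ = N := by
      rw [one_mul, ← Nat.cast_pow, Nat.floor_natCast]
    have hZ : Z b x 1 1 k = (G.card : ℝ) / (N : ℝ) := by
      unfold Z
      rw [hfloor]
      congr 2
      · rw [Nat.card_eq_fintype_card, Fintype.card_subtype]
      · rw [hN]; push_cast; ring
    rw [hZ]
    constructor
    · have h1 : (N : ℝ) - 2 * (k : ℝ) ≤ (G.card : ℝ) := by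
        have : N ≤ G.card + 2 * k := by omega
        have := (Nat.cast_le (α := ℝ)).mpr this
        push_cast at this
        linarith
      have h2 : ((N : ℝ) - 2 * (k : ℝ)) / (N : ℝ) ≤ (G.card : ℝ) / (N : ℝ) := by
        gcongr
      have h3 : ((N : ℝ) - 2 * (k : ℝ)) / (N : ℝ) = 1 - 2 * (k : ℝ) / (N : ℝ) := by
        field_simp
      rw [h3] at h2
      have hNval : ((N : ℝ)) = (b : ℝ) ^ k := by rw [hN]; push_cast; ring
      rw [← hNval]
      exact h2
    · rw [div_le_one hNR]
      exact_mod_cast hGub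
  -- Step 2: the limit
  have hlim : Tendsto (fun k : ℕ => Z b x 1 1 k) atTop (nhds 1) := by
    have hlow : Tendsto (fun k : ℕ => 1 - 2 * (k : ℝ) / (b : ℝ) ^ k) atTop (nhds 1) := by
      have h0 : Tendsto (fun k : ℕ => 2 * (k : ℝ) / (b : ℝ) ^ k) atTop (nhds 0) := by
        have hr0 : (0 : ℝ) ≤ 1 / b := by positivity
        have hr1 : (1 : ℝ) / b < 1 := by
          rw [div_lt_one hbR]; exact_mod_cast hb1
        have := (tendsto_self_mul_const_pow_of_lt_one hr0 hr1).const_mul 2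
        rw [mul_zero] at this
        convert this using 2 with k
        rw [div_pow, one_pow]
        ring
      have := h0.const_sub 1
      simpa using this
    apply tendsto_of_tendsto_of_tendsto_of_le_of_le' hlow tendsto_const_nhds
    · filter_upwards [eventually_ge_atTop 1] with k hk
      exact (key k hk).1
    · filter_upwards [eventually_ge_atTop 1] with k hk
      exact (key k hk).2
  refine ⟨hlim, fun h => ?_⟩
  have h1 := h 1
  have heq := tendsto_nhds_unique hlim h1
  have : Real.exp (-1) < 1 := Real.exp_lt_one_iff.mpr (by norm_num)
  simp [Nat.factorial] at heq
  linarith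
end
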